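/- Suppose f ∈ C(X,ℝ) admits two f-maximizing measures μ₁ ≠ μ₂ and g ∈ C(X,ℝ) satisfies ∫ g dμ₁ ≠ ∫ g dμ₂. Then the one-sided derivatives of τ ↦ β(f + τ·g) at τ = 0 disagree: liminf_{τ → 0⁺} (β(f + τ·g) − β(f))/τ > limsup_{τ → 0⁻} (β(f + τ·g) − β(f))/τ; in particular the function τ ↦ β(f + τ·g) is not differentiable at τ = 0. -/

import Mathlib

open MeasureTheory Topology Filter
open scoped NNReal

variable {X : Type*} [MetricSpace X] [CompactSpace X] [Nonempty X]
  [MeasurableSpace X] [BorelSpace X]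

/-- The set of `T`-invariant Borel probability measures on `X`,
equipped (as a subtype) with the weak* topology. -/
def Minv (T : X → X) : Set (ProbabilityMeasure X) :=
  {μ | (μ : Measure X).map T = (μ : Measure X)}

/-- The integral of a continuous function against a probability measure. -/
noncomputable def intf (f : C(X, ℝ)) (μ : ProbabilityMeasure X) : ℝ :=
  ∫ x, f x ∂(μ : Measure X)

/-- The maximum ergodic average `β(f) = sup {∫ f dμ : μ ∈ M}`. -/
noncomputable def beta (T : X → X) (f : C(X, ℝ)) : ℝ :=
  sSup (intf f '' Minv T)

/-- The set of `f`-maximizing measures. -/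
def MMax (T : X → X) (f : C(X, ℝ)) : Set (ProbabilityMeasure X) :=
  {μ ∈ Minv T | intf f μ = beta T f}

/-!
Testing `β(f + τ g)` against a maximizing measure `ν` of `f` gives
`β(f + τ g) ≥ β(f) + τ ∫ g dν`. So, if `∫ g dμ₁ < ∫ g dμ₂`, the difference quotient of
`τ ↦ β(f + τ g)` at `0` is at least `∫ g dμ₂` for `τ > 0` and at most `∫ g dμ₁` for `τ < 0`.
The bound `β(f + τ g) ≤ β(f) + |τ| ‖g‖` keeps the quotients bounded; without it the real-valued
`limsup` and `liminf` could be junk values.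
-/

section Slope

variable {F : ℝ → ℝ} {x a C : ℝ}

theorem limsup_slope_nhdsLT_le (hlow : ∀ y, F x + (y - x) * a ≤ F y)
    (hup : ∀ y, F y ≤ F x + |y - x| * C) :
    limsup (slope F x) (𝓝[<] x) ≤ a := by
  have hleft : ∀ᶠ y in 𝓝[<] x, y < x := self_mem_nhdsWithin
  have hbdd : IsBoundedUnder (· ≥ ·) (𝓝[<] x) (slope F x) := by
    refine isBoundedUnder_of_eventually_ge (a := -C) (hleft.mono fun y hy => ?_)
    have hyx : y - x < 0 := sub_neg.mpr hy
    have hFy := hup y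
    rw [abs_of_neg hyx] at hFy
    rw [slope_def_field, le_div_iff_of_neg hyx]
    linarith
  refine limsup_le_of_le hbdd.isCoboundedUnder_le (hleft.mono fun y hy => ?_)
  rw [slope_def_field, div_le_iff_of_neg (sub_neg.mpr hy)]
  linarith [hlow y]

theorem le_liminf_slope_nhdsGT (hlow : ∀ y, F x + (y - x) * a ≤ F y)
    (hup : ∀ y, F y ≤ F x + |y - x| * C) :
    a ≤ liminf (slope F x) (𝓝[>] x) := by
  have hright : ∀ᶠ y in 𝓝[>] x, x < y := self_mem_nhdsWithin
  have hbdd : IsBoundedUnder (· ≤ ·) (𝓝[>] x) (slope F x) := by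
    refine isBoundedUnder_of_eventually_le (a := C) (hright.mono fun y hy => ?_)
    have hyx : 0 < y - x := sub_pos.mpr hy
    have hFy := hup y
    rw [abs_of_pos hyx] at hFy
    rw [slope_def_field, div_le_iff₀ hyx]
    linarith
  refine le_liminf_of_le hbdd.isCoboundedUnder_ge (hright.mono fun y hy => ?_)
  rw [slope_def_field, le_div_iff₀ (sub_pos.mpr hy)]
  linarith [hlow y]

theorem not_differentiableAt_of_limsup_slope_lt_liminf
    (h : limsup (slope F x) (𝓝[<] x) < liminf (slope F x) (𝓝[>] x)) :
    ¬ DifferentiableAt ℝ F x := by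
  intro hF
  have hslope := hasDerivAt_iff_tendsto_slope.mp hF.hasDerivAt
  rw [(hslope.mono_left (nhdsLT_le_nhdsNE x)).limsup_eq,
    (hslope.mono_left (nhdsGT_le_nhdsNE x)).liminf_eq] at h
  exact h.false

end Slope

section Beta

variable (T : X → X)

theorem abs_intf_le (f : C(X, ℝ)) (μ : ProbabilityMeasure X) : |intf f μ| ≤ ‖f‖ := by
  simpa [intf] using
    (BoundedContinuousFunction.mkOfCompact f).norm_integral_le_norm (μ : Measure X)

theorem intf_add_smul (f g : C(X, ℝ)) (τ : ℝ) (μ : ProbabilityMeasure X) :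
    intf (f + τ • g) μ = intf f μ + τ * intf g μ := by
  have hint (h : C(X, ℝ)) : Integrable h (μ : Measure X) :=
    (BoundedContinuousFunction.mkOfCompact h).integrable _
  simp only [intf, ContinuousMap.add_apply, ContinuousMap.smul_apply, smul_eq_mul]
  rw [integral_add (hint f) ((hint g).const_mul τ), integral_const_mul]

theorem intf_le_beta (f : C(X, ℝ)) {μ : ProbabilityMeasure X} (hμ : μ ∈ Minv T) :
    intf f μ ≤ beta T f :=
  le_csSup ⟨‖f‖, by rintro _ ⟨ν, -, rfl⟩; exact le_of_abs_le (abs_intf_le f ν)⟩ ⟨μ, hμ, rfl⟩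

theorem beta_add_mul_intf_le_beta_add_smul {f : C(X, ℝ)} (g : C(X, ℝ)) (τ : ℝ)
    {ν : ProbabilityMeasure X} (hν : ν ∈ MMax T f) :
    beta T f + τ * intf g ν ≤ beta T (f + τ • g) := by
  simpa only [intf_add_smul, hν.2] using intf_le_beta T (f + τ • g) hν.1

theorem beta_add_smul_le (hM : (Minv T).Nonempty) (f g : C(X, ℝ)) (τ : ℝ) :
    beta T (f + τ • g) ≤ beta T f + |τ| * ‖g‖ := by
  refine csSup_le (hM.image _) ?_
  rintro _ ⟨μ, hμ, rfl⟩
  have hg : τ * intf g μ ≤ |τ| * ‖g‖ :=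
    calc τ * intf g μ ≤ |τ| * |intf g μ| := (le_abs_self _).trans (abs_mul _ _).le
      _ ≤ |τ| * ‖g‖ := mul_le_mul_of_nonneg_left (abs_intf_le g μ) (abs_nonneg τ)
  rw [intf_add_smul]
  linarith [intf_le_beta T f hμ]

end Beta

theorem beta_not_differentiable_of_nonunique_general (T : X → X)
    (hM : (Minv T).Nonempty) (f g : C(X, ℝ)) (μ₁ μ₂ : ProbabilityMeasure X)
    (h₁ : μ₁ ∈ MMax T f) (h₂ : μ₂ ∈ MMax T f)
    (hg : intf g μ₁ ≠ intf g μ₂) :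
    limsup (fun τ : ℝ => (beta T (f + τ • g) - beta T f) / τ) (𝓝[<] 0) <
      liminf (fun τ : ℝ => (beta T (f + τ • g) - beta T f) / τ) (𝓝[>] 0) ∧
    ¬ DifferentiableAt ℝ (fun τ : ℝ => beta T (f + τ • g)) 0 := by
  wlog hlt : intf g μ₁ < intf g μ₂ generalizing μ₁ μ₂
  · exact this μ₂ μ₁ h₂ h₁ hg.symm (hg.lt_or_gt.resolve_left hlt)
  set F : ℝ → ℝ := fun τ => beta T (f + τ • g)
  have hF0 : F 0 = beta T f := by simp only [F, zero_smul, add_zero]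
  have hquot : (fun τ : ℝ => (beta T (f + τ • g) - beta T f) / τ) = slope F 0 := by
    ext τ
    rw [slope_def_field, hF0, sub_zero]
  have hlow (ν : ProbabilityMeasure X) (hν : ν ∈ MMax T f) (τ : ℝ) :
      F 0 + (τ - 0) * intf g ν ≤ F τ := by
    simpa only [hF0, sub_zero] using beta_add_mul_intf_le_beta_add_smul T g τ hν
  have hup (τ : ℝ) : F τ ≤ F 0 + |τ - 0| * ‖g‖ := by
    simpa only [hF0, sub_zero] using beta_add_smul_le T hM f g τ
  have hjump : limsup (slope F 0) (𝓝[<] 0) < liminf (slope F 0) (𝓝[>] 0) :=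
    (limsup_slope_nhdsLT_le (hlow μ₁ h₁) hup).trans_lt
      (hlt.trans_le (le_liminf_slope_nhdsGT (hlow μ₂ h₂) hup))
  rw [hquot]
  exact ⟨hjump, not_differentiableAt_of_limsup_slope_lt_liminf hjump⟩

/-- If `f` has two maximizing measures separated by `g`, then the one-sided derivatives of
`τ ↦ β(f + τ g)` at `0` disagree, and in particular this map is not differentiable at `0`. -/
theorem beta_not_differentiable_of_nonunique (T : X → X) (hT : Continuous T)
    (hM : (Minv T).Nonempty) (f g : C(X, ℝ)) (μ₁ μ₂ : ProbabilityMeasure X)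
    (h₁ : μ₁ ∈ MMax T f) (h₂ : μ₂ ∈ MMax T f) (hne : μ₁ ≠ μ₂)
    (hg : intf g μ₁ ≠ intf g μ₂) :
    limsup (fun τ : ℝ => (beta T (f + τ • g) - beta T f) / τ) (𝓝[<] 0) <
      liminf (fun τ : ℝ => (beta T (f + τ • g) - beta T f) / τ) (𝓝[>] 0) ∧
    ¬ DifferentiableAt ℝ (fun τ : ℝ => beta T (f + τ • g)) 0 :=
  beta_not_differentiable_of_nonunique_general T hM f g μ₁ μ₂ h₁ h₂ hg
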